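/- Let p be a prime. The group SL(4, ℤ[1/p]) is finitely generated. -/

import Mathlib

/-!
`ℤ[1/p]` carries a Euclidean function: the least `|a|` over all ways of writing `x = a / p ^ k`.
Hence Gauss–Jordan elimination by row operations alone reduces every matrix of determinant one
to the identity, so `SL(n, ℤ[1/p])` is generated by the transvections `e_ij(c)`. Since `c ↦ e_ij(c)`
is additive and, for `n ≥ 3`, the commutator of `e_ik(a)` and `e_kj(b)` is `e_ij(a * b)`, the
finitely many `e_ij(1)` and `e_ij(1/p)` already produce every `e_ij(a / p ^ k)`.
-/

open Matrix

def IsEuclideanFunction {R : Type*} [CommRing R] (δ : R → ℕ) : Prop :=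
  ∀ x y : R, y ≠ 0 → ∃ q : R, δ (x - q * y) < δ y

theorem Fintype.exists_ne_ne_of_three_le_card {ι : Type*} [Fintype ι] [DecidableEq ι]
    (h3 : 3 ≤ Fintype.card ι) (i j : ι) : ∃ k, i ≠ k ∧ k ≠ j := by
  obtain ⟨k, -, hk⟩ := Finset.exists_mem_notMem_of_card_lt_card
    (s := {i, j}) (t := Finset.univ) (Finset.card_le_two.trans_lt h3)
  simp only [Finset.mem_insert, Finset.mem_singleton, not_or] at hk
  exact ⟨k, Ne.symm hk.1, hk.2⟩

namespace Matrix

variable {R : Type*} [CommRing R] {n : ℕ}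

def LeftColsEqOne (k : ℕ) (A : Matrix (Fin n) (Fin n) R) : Prop :=
  ∀ i l : Fin n, (l : ℕ) < k → A i l = (1 : Matrix (Fin n) (Fin n) R) i l

theorem LeftColsEqOne.transvection_mul {k : ℕ} {A : Matrix (Fin n) (Fin n) R}
    (hA : LeftColsEqOne k A) (i : Fin n) {j : Fin n} (hj : k ≤ j) (c : R) :
    LeftColsEqOne k (transvection i j c * A) := by
  intro a l hl
  by_cases hai : a = i
  · have hjl : j ≠ l := fun h => by subst h; omega
    rw [hai, transvection_mul_apply_same, hA i l hl, hA j l hl, one_apply_ne hjl, mul_zero,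
      add_zero]
  · rw [transvection_mul_apply_of_ne _ _ _ _ hai, hA a l hl]

theorem LeftColsEqOne.apply_self_eq_det {κ : Fin n} {A : Matrix (Fin n) (Fin n) R}
    (hA : LeftColsEqOne κ A) (hκ : ∀ i, i ≤ κ) : A κ κ = A.det := by
  have hupper : A.BlockTriangular id := fun i l (hli : l < i) => by
    rw [hA i l (lt_of_lt_of_le hli (hκ i)), one_apply_ne hli.ne']
  rw [det_of_isUpperTriangular hupper, Finset.prod_eq_single κ (fun i _ hi => ?_) (by simp)]
  rw [hA i i ((hκ i).lt_of_ne hi), one_apply_eq]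

end Matrix

namespace Matrix.SpecialLinearGroup

variable {ι R : Type*} [DecidableEq ι] [Fintype ι] [CommRing R]

variable (ι R) in
def elementarySubgroup : Subgroup (SpecialLinearGroup ι R) :=
  Subgroup.closure {A | ∃ (i j : ι) (h : i ≠ j) (c : R), transvection h c = A}

theorem transvection_mem_elementarySubgroup {i j : ι} (h : i ≠ j) (c : R) :
    transvection h c ∈ elementarySubgroup ι R :=
  Subgroup.subset_closure ⟨i, j, h, c, rfl⟩

section GaussJordan

variable {n : ℕ} {κ : Fin n}

local notation:1024 "↑ₘ" A:1024 =>
  ((A : SpecialLinearGroup (Fin n) R) : Matrix (Fin n) (Fin n) R)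

theorem exists_mem_elementarySubgroup_col_single_below {δ : R → ℕ} (hδ : IsEuclideanFunction δ)
    (A : SpecialLinearGroup (Fin n) R) (hA : LeftColsEqOne κ ↑ₘA) :
    ∃ g ∈ elementarySubgroup (Fin n) R, LeftColsEqOne κ ↑ₘ(g * A) ∧
      ∃ j, κ ≤ j ∧ ∀ i, κ ≤ i → i ≠ j → ↑ₘ(g * A) i κ = 0 := by
  classical
  obtain ⟨N, hN⟩ : ∃ N, ∑ i, δ (↑ₘA i κ) = N := ⟨_, rfl⟩
  induction N using Nat.strong_induction_on generalizing A with
  | _ N ih =>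
  set s := Finset.univ.filter fun i => κ ≤ i ∧ ↑ₘA i κ ≠ 0
  rcases s.eq_empty_or_nonempty with hs | hs
  · refine ⟨1, one_mem _, ?_⟩
    rw [one_mul]
    refine ⟨hA, κ, le_rfl, fun i hi _ => not_not.1 fun h => ?_⟩
    exact Finset.eq_empty_iff_forall_notMem.1 hs i (by simp [s, hi, h])
  obtain ⟨j, hjs, hjmin⟩ := s.exists_min_image (fun i => δ (↑ₘA i κ)) hs
  simp only [s, Finset.mem_filter, Finset.mem_univ, true_and] at hjs hjmin
  by_cases hsingle : ∃ i, κ ≤ i ∧ i ≠ j ∧ ↑ₘA i κ ≠ 0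
  swap
  · refine ⟨1, one_mem _, ?_⟩
    rw [one_mul]
    exact ⟨hA, j, hjs.1, fun i hκi hij => not_not.1 fun h => hsingle ⟨i, hκi, hij, h⟩⟩
  obtain ⟨i, hκi, hij, hi⟩ := hsingle
  obtain ⟨q, hq⟩ := hδ (↑ₘA i κ) (↑ₘA j κ) hjs.2
  set B := transvection hij (-q) * A
  have hB : ↑ₘB = Matrix.transvection i j (-q) * ↑ₘA := rfl
  have hBi : δ (↑ₘB i κ) < δ (↑ₘA i κ) := by
    rw [hB, transvection_mul_apply_same, neg_mul, ← sub_eq_add_neg]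
    exact hq.trans_le (hjmin i ⟨hκi, hi⟩)
  have hlt : ∑ l, δ (↑ₘB l κ) < N := by
    rw [← hN]
    refine Finset.sum_lt_sum (fun l _ => ?_) ⟨i, Finset.mem_univ _, hBi⟩
    by_cases hli : l = i
    · exact hli ▸ hBi.le
    · rw [hB, transvection_mul_apply_of_ne _ _ _ _ hli]
  obtain ⟨g, hg, hgB, j', hj', hsupp⟩ :=
    ih _ hlt B (hB ▸ hA.transvection_mul i hjs.1 (-q)) rfl
  exact ⟨g * transvection hij (-q), mul_mem hg (transvection_mem_elementarySubgroup _ _),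
    by rwa [mul_assoc], j', hj', by rwa [mul_assoc]⟩

theorem isUnit_apply_of_leftColsEqOne (A : SpecialLinearGroup (Fin n) R)
    (hA : LeftColsEqOne κ ↑ₘA) {j : Fin n} (hj : ∀ i, κ ≤ i → i ≠ j → ↑ₘA i κ = 0) :
    IsUnit (↑ₘA j κ) := by
  -- Row `κ` of `A⁻¹` vanishes left of `κ`, so `(A⁻¹ * A) κ κ = 1` is a single product.
  have hinv : ↑ₘA⁻¹ * ↑ₘA = 1 := by rw [← coe_mul, inv_mul_cancel, coe_one]
  have hrow : ∀ l < κ, ↑ₘA⁻¹ κ l = 0 := fun l hl => by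
    have h := congrFun₂ hinv κ l
    rwa [mul_apply, Finset.sum_eq_single l (fun b _ hb => by rw [hA b l hl, one_apply_ne hb,
      mul_zero]) (by simp), hA l l hl, one_apply_eq, mul_one, one_apply_ne hl.ne'] at h
  refine .of_mul_eq_one_right (↑ₘA⁻¹ κ j) ?_
  have h := congrFun₂ hinv κ κ
  rwa [mul_apply, Finset.sum_eq_single j (fun i _ hij => ?_) (by simp), one_apply_eq] at h
  rcases lt_or_ge i κ with hi | hi
  · rw [hrow i hi, zero_mul]
  · rw [hj i hi hij, mul_zero]

theorem exists_mem_elementarySubgroup_apply_self_eq_one {δ : R → ℕ}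
    (hδ : IsEuclideanFunction δ) (A : SpecialLinearGroup (Fin n) R)
    (hA : LeftColsEqOne κ ↑ₘA) :
    ∃ g ∈ elementarySubgroup (Fin n) R,
      LeftColsEqOne κ ↑ₘ(g * A) ∧ ↑ₘ(g * A) κ κ = 1 := by
  obtain ⟨g, hg, hB, j, hκj, hsupp⟩ := exists_mem_elementarySubgroup_col_single_below hδ A hA
  obtain ⟨e, he⟩ := (isUnit_apply_of_leftColsEqOne _ hB hsupp).exists_left_inv
  suffices ∃ h ∈ elementarySubgroup (Fin n) R,
      LeftColsEqOne κ ↑ₘ(h * (g * A)) ∧ ↑ₘ(h * (g * A)) κ κ = 1 by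
    obtain ⟨h, hh, hhgA⟩ := this
    exact ⟨h * g, mul_mem hh hg, by rwa [mul_assoc]⟩
  set B := g * A
  rcases eq_or_ne j κ with rfl | hjκ
  · by_cases hlast : ∀ i, i ≤ j
    · -- `B` is then upper triangular with diagonal `1, …, 1, B j j`, so its pivot is `det B`.
      refine ⟨1, one_mem _, ?_⟩
      rw [one_mul, hB.apply_self_eq_det hlast, B.2]
      exact ⟨hB, rfl⟩
    obtain ⟨i, hi⟩ : ∃ i, j < i := by simpa using hlast
    -- Copy the pivot into row `i`, then add `e - 1` times row `i` to row `j`: `e * B j j = 1`.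
    set C := transvection hi.ne' (1 : R) * B
    have hC : ↑ₘC = Matrix.transvection i j 1 * ↑ₘB := rfl
    have hCi : ↑ₘC i j = ↑ₘB j j := by
      rw [hC, transvection_mul_apply_same, hsupp i hi.le hi.ne', one_mul, zero_add]
    have hCj : ↑ₘC j j = ↑ₘB j j := by rw [hC, transvection_mul_apply_of_ne _ _ _ _ hi.ne]
    refine ⟨transvection hi.ne (e - 1) * transvection hi.ne' 1,
      mul_mem (transvection_mem_elementarySubgroup _ _) (transvection_mem_elementarySubgroup _ _),
      ?_, ?_⟩ <;> rw [mul_assoc]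
    · exact (hB.transvection_mul i le_rfl 1).transvection_mul j hi.le (e - 1)
    · change (Matrix.transvection j i (e - 1) * ↑ₘC) j j = 1
      rw [transvection_mul_apply_same, hCi, hCj]
      linear_combination he
  · refine ⟨transvection hjκ.symm e, transvection_mem_elementarySubgroup _ _,
      hB.transvection_mul κ hκj e, ?_⟩
    change (Matrix.transvection κ j e * ↑ₘB) κ κ = 1
    rw [transvection_mul_apply_same, hsupp κ le_rfl hjκ.symm, he, zero_add]

theorem exists_mem_elementarySubgroup_leftColsEqOne_succ_of_apply_self_eq_one
    (A : SpecialLinearGroup (Fin n) R) (hA : LeftColsEqOne κ ↑ₘA) (h1 : ↑ₘA κ κ = 1) :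
    ∃ g ∈ elementarySubgroup (Fin n) R, LeftColsEqOne (κ + 1) ↑ₘ(g * A) := by
  suffices ∀ (s : Finset (Fin n)) (A : SpecialLinearGroup (Fin n) R),
      LeftColsEqOne κ ↑ₘA → ↑ₘA κ κ = 1 → (∀ i ∉ s, i ≠ κ → ↑ₘA i κ = 0) →
      ∃ g ∈ elementarySubgroup (Fin n) R, LeftColsEqOne (κ + 1) ↑ₘ(g * A) from
    this Finset.univ A hA h1 (by simp)
  intro s
  induction s using Finset.induction_on with
  | empty =>
    intro A hA h1 h0
    refine ⟨1, one_mem _, fun i l hl => ?_⟩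
    rw [one_mul]
    rcases (Nat.lt_succ_iff.1 hl).lt_or_eq with hl | hl
    · exact hA i l hl
    obtain rfl : l = κ := Fin.ext hl
    rcases eq_or_ne i l with rfl | hi
    · rw [h1, one_apply_eq]
    · rw [h0 i (Finset.notMem_empty i) hi, one_apply_ne hi]
  | insert a s _ ih =>
    intro A hA h1 h0
    rcases eq_or_ne a κ with rfl | haκ
    · exact ih A hA h1 fun i hi hia => h0 i (by simp [hi, hia]) hia
    set B := transvection haκ (-↑ₘA a κ) * A
    have hB : ↑ₘB = Matrix.transvection a κ (-↑ₘA a κ) * ↑ₘA := rfl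
    have hB1 : ↑ₘB κ κ = 1 := by rw [hB, transvection_mul_apply_of_ne _ _ _ _ haκ.symm, h1]
    have hB0 : ∀ i ∉ s, i ≠ κ → ↑ₘB i κ = 0 := fun i hi hiκ => by
      rcases eq_or_ne i a with rfl | hia
      · rw [hB, transvection_mul_apply_same, h1]
        ring
      · rw [hB, transvection_mul_apply_of_ne _ _ _ _ hia]
        exact h0 i (by simp [hi, hia]) hiκ
    obtain ⟨g, hg, hgB⟩ := ih B (hB ▸ hA.transvection_mul a le_rfl _) hB1 hB0
    exact ⟨g * transvection haκ _, mul_mem hg (transvection_mem_elementarySubgroup _ _),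
      by rwa [mul_assoc]⟩

theorem exists_mem_elementarySubgroup_leftColsEqOne_succ {δ : R → ℕ}
    (hδ : IsEuclideanFunction δ) (A : SpecialLinearGroup (Fin n) R)
    (hA : LeftColsEqOne κ ↑ₘA) :
    ∃ g ∈ elementarySubgroup (Fin n) R, LeftColsEqOne (κ + 1) ↑ₘ(g * A) := by
  obtain ⟨g, hg, hgA, h1⟩ := exists_mem_elementarySubgroup_apply_self_eq_one hδ A hA
  obtain ⟨h, hh, hhgA⟩ :=
    exists_mem_elementarySubgroup_leftColsEqOne_succ_of_apply_self_eq_one _ hgA h1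
  exact ⟨h * g, mul_mem hh hg, by rwa [mul_assoc]⟩

theorem elementarySubgroup_eq_top {δ : R → ℕ} (hδ : IsEuclideanFunction δ) :
    elementarySubgroup (Fin n) R = ⊤ := by
  have hmem : ∀ k ≤ n, ∀ A : SpecialLinearGroup (Fin n) R, LeftColsEqOne k ↑ₘA →
      A ∈ elementarySubgroup (Fin n) R := by
    intro k hk
    induction hk using Nat.decreasingInduction with
    | self =>
      intro A hA
      obtain rfl : A = 1 := Subtype.ext (Matrix.ext fun i l => hA i l l.isLt)
      exact one_mem _
    | of_succ k hk ih =>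
      intro A hA
      obtain ⟨g, hg, hgA⟩ :=
        exists_mem_elementarySubgroup_leftColsEqOne_succ hδ (κ := ⟨k, hk⟩) A hA
      simpa using mul_mem (inv_mem hg) (ih _ hgA)
  exact eq_top_iff.2 fun A _ => hmem 0 n.zero_le A fun _ _ h => absurd h (Nat.not_lt_zero _)

end GaussJordan

theorem transvection_commutator {i j k : ι} (hik : i ≠ k) (hkj : k ≠ j) (hij : i ≠ j)
    (a b : R) :
    transvection hik a * transvection hkj b * transvection hik (-a) * transvection hkj (-b) =
      transvection hij (a * b) := by
  refine Subtype.ext ?_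
  simp only [coe_mul, transvection_coe, mul_add, add_mul, one_mul, mul_one,
    single_mul_single_same, single_mul_single_of_ne _ _ _ _ hik.symm,
    single_mul_single_of_ne _ _ _ _ hkj.symm, single_mul_single_of_ne _ _ _ _ hij.symm, zero_mul,
    mul_neg, neg_mul, ← single_neg]
  abel

def transvectionCoeffs (K : Subgroup (SpecialLinearGroup ι R)) {i j : ι} (h : i ≠ j) :
    AddSubgroup R where
  carrier := {c | transvection h c ∈ K}
  zero_mem' := by simp [K.one_mem]
  add_mem' ha hb := by simpa [transvection_add] using K.mul_mem ha hb
  neg_mem' ha := by simpa [transvection_inv] using K.inv_mem ha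

@[simp]
theorem mem_transvectionCoeffs {K : Subgroup (SpecialLinearGroup ι R)} {i j : ι} {h : i ≠ j}
    {c : R} : c ∈ transvectionCoeffs K h ↔ transvection h c ∈ K :=
  Iff.rfl

theorem mul_mem_transvectionCoeffs {K : Subgroup (SpecialLinearGroup ι R)} {i j k : ι}
    (hik : i ≠ k) (hkj : k ≠ j) (hij : i ≠ j) {a b : R} (ha : a ∈ transvectionCoeffs K hik)
    (hb : b ∈ transvectionCoeffs K hkj) : a * b ∈ transvectionCoeffs K hij := by
  rw [mem_transvectionCoeffs, ← transvection_commutator hik hkj hij]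
  exact K.mul_mem (K.mul_mem (K.mul_mem ha hb) (neg_mem ha)) (neg_mem hb)

def basicTransvections (ρ : R) : Set (SpecialLinearGroup ι R) :=
  ⋃ (i) (j) (h : i ≠ j), {transvection h 1, transvection h ρ}

theorem finite_basicTransvections (ρ : R) :
    (basicTransvections ρ : Set (SpecialLinearGroup ι R)).Finite :=
  Set.finite_iUnion fun _ => Set.finite_iUnion fun _ => Set.finite_iUnion fun _ => Set.toFinite _

theorem elementarySubgroup_le_closure_basicTransvections (h3 : 3 ≤ Fintype.card ι) {ρ : R}
    (hgen : ∀ x : R, ∃ (a : ℤ) (k : ℕ), x = a * ρ ^ k) :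
    elementarySubgroup ι R ≤ Subgroup.closure (basicTransvections ρ) := by
  set K := Subgroup.closure (basicTransvections (ι := ι) ρ)
  have hbasic : ∀ {i j : ι} (h : i ≠ j) (c : R), c = 1 ∨ c = ρ → c ∈ transvectionCoeffs K h :=
    fun h c hc => Subgroup.subset_closure <|
      Set.mem_iUnion₂_of_mem _ <| Set.mem_iUnion_of_mem h <| by rcases hc with rfl | rfl <;> simp
  have hpow : ∀ (k : ℕ) {i j : ι} (h : i ≠ j), ρ ^ k ∈ transvectionCoeffs K h := by
    intro k
    induction k with
    | zero => exact fun h => hbasic h _ (.inl (pow_zero ρ))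
    | succ k ih =>
      intro i j h
      obtain ⟨l, hil, hlj⟩ := Fintype.exists_ne_ne_of_three_le_card h3 i j
      rw [pow_succ]
      exact mul_mem_transvectionCoeffs hil hlj h (ih hil) (hbasic hlj _ (.inr rfl))
  rw [elementarySubgroup, Subgroup.closure_le]
  rintro _ ⟨i, j, h, c, rfl⟩
  obtain ⟨a, k, rfl⟩ := hgen c
  simpa using zsmul_mem (hpow k h) a

end Matrix.SpecialLinearGroup

section LeastNumerator

variable {R : Type*} [CommRing R]

noncomputable def leastNumerator (ρ x : R) : ℕ :=
  sInf {m | ∃ (a : ℤ) (k : ℕ), x = a * ρ ^ k ∧ a.natAbs = m}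

theorem isEuclideanFunction_leastNumerator {ρ : R} (hρ : IsUnit ρ)
    (hgen : ∀ x : R, ∃ (a : ℤ) (k : ℕ), x = a * ρ ^ k) :
    IsEuclideanFunction (leastNumerator ρ) := by
  intro x y hy
  obtain ⟨a, k, rfl⟩ := hgen x
  obtain ⟨b, l, rfl, hb⟩ :
      ∃ (b : ℤ) (l : ℕ), y = b * ρ ^ l ∧ b.natAbs = leastNumerator ρ y := by
    obtain ⟨b, l, h⟩ := hgen y
    exact Nat.sInf_mem (s := {m | ∃ (a : ℤ) (k : ℕ), y = a * ρ ^ k ∧ a.natAbs = m})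
      ⟨b.natAbs, b, l, h, rfl⟩
  have hb0 : b ≠ 0 := by
    rintro rfl
    simp at hy
  obtain ⟨π, hπ⟩ := hρ.exists_right_inv
  have hπl : π ^ l * ρ ^ l = 1 := by rw [← mul_pow, mul_comm, hπ, one_pow]
  refine ⟨(a / b : ℤ) * ρ ^ k * π ^ l, ?_⟩
  have hrem :
      a * ρ ^ k - (a / b : ℤ) * ρ ^ k * π ^ l * (b * ρ ^ l) = (a % b : ℤ) * ρ ^ k := by
    rw [Int.emod_def]
    push_cast
    linear_combination (-(b * (a / b : ℤ)) * ρ ^ k : R) * hπl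
  calc leastNumerator ρ (a * ρ ^ k - (a / b : ℤ) * ρ ^ k * π ^ l * (b * ρ ^ l))
      ≤ (a % b).natAbs := Nat.sInf_le ⟨a % b, k, hrem, rfl⟩
    _ < b.natAbs := by
      have := Int.emod_lt a hb0
      have := Int.emod_nonneg a hb0
      omega
    _ = leastNumerator ρ (b * ρ ^ l) := hb

end LeastNumerator

theorem IsLocalization.Away.exists_eq_intCast_mul_invSelf_pow {S : Type*} [CommRing S]
    [Algebra ℤ S] (m : ℤ) [IsLocalization.Away m S] (x : S) :
    ∃ (a : ℤ) (k : ℕ), x = a * IsLocalization.Away.invSelf m ^ k := by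
  obtain ⟨k, a, h⟩ := IsLocalization.Away.surj m x
  refine ⟨a, k, ?_⟩
  rw [← eq_intCast (algebraMap ℤ S), ← h, mul_assoc, ← mul_pow,
    IsLocalization.Away.mul_invSelf, one_pow, mul_one]

theorem sl4_fg_general (p : ℕ) :
    Group.FG (Matrix.SpecialLinearGroup (Fin 4) (Localization.Away (p : ℤ))) := by
  set ρ := IsLocalization.Away.invSelf (S := Localization.Away (p : ℤ)) (p : ℤ)
  have hgen := IsLocalization.Away.exists_eq_intCast_mul_invSelf_pow
    (S := Localization.Away (p : ℤ)) (p : ℤ)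
  have hρ : IsUnit ρ := .of_mul_eq_one_right _ (IsLocalization.Away.mul_invSelf (p : ℤ))
  refine Group.fg_iff.2 ⟨SpecialLinearGroup.basicTransvections ρ, top_le_iff.1 ?_,
    SpecialLinearGroup.finite_basicTransvections ρ⟩
  rw [← SpecialLinearGroup.elementarySubgroup_eq_top
    (isEuclideanFunction_leastNumerator hρ hgen)]
  exact SpecialLinearGroup.elementarySubgroup_le_closure_basicTransvections (by simp) hgen

/-- For a prime `p`, the group `SL(4, ℤ[1/p])` is finitely generated. -/
theorem sl4_fg (p : ℕ) (hp : p.Prime) :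
    Group.FG (Matrix.SpecialLinearGroup (Fin 4) (Localization.Away (p : ℤ))) :=
  sl4_fg_general p
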